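/- arXiv:1110.6779 — 2 statements merged into one kernel-verified Lean document; each statement's English description precedes it below -/
import Mathlib

section
/- For n ≥ 1, the polynomial a_n(y) = (y+1)·Σ_{i=1}^n i!·S(n,i)·2^{n-i}·(y-1)^i satisfies a_n(y) = Σ_{k=1}^{n} A(n,k)(y-1)^k (y+1)^{n-k+1}, where A(n,k) is the number of permutations of {1,...,n} with exactly k-1 descents. -/
open Polynomial Finset

/-- Derivative polynomials for tangent: `P 0 = X`, `P (n+1) = (1+X^2) * (P n)'`. -/
noncomputable def P : ℕ → Polynomial ℝ
  | 0 => Polynomial.X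
  | n + 1 => (1 + Polynomial.X ^ 2) * (P n).derivative

/-- The values of a permutation of `Fin n`, as a function `ℕ → ℕ` (junk value `0` off-range). -/
def permVal {n : ℕ} (π : Equiv.Perm (Fin n)) : ℕ → ℕ :=
  fun j => if h : j < n then (π ⟨j, h⟩ : ℕ) else 0

/-- The number of alternating runs of a permutation of `{1,…,n}` (0-indexed positions):
one more than the number of interior positions where the permutation changes direction.
By convention this is `0` when `n ≤ 1`. -/
def runs (n : ℕ) (π : Equiv.Perm (Fin n)) : ℕ :=
  if n ≤ 1 then 0 else
    1 + ((Finset.Ico 1 (n - 1)).filter (fun i =>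
      (permVal π (i - 1) < permVal π i ∧ permVal π (i + 1) < permVal π i) ∨
      (permVal π i < permVal π (i - 1) ∧ permVal π i < permVal π (i + 1)))).card

/-- `R n k`: the number of permutations of `{1,…,n}` with exactly `k` alternating runs. -/
def R (n k : ℕ) : ℕ :=
  (Finset.univ.filter (fun π : Equiv.Perm (Fin n) => runs n π = k)).card

/-- The generating polynomial `R_n(x) = ∑_k R(n,k) x^k`. -/
noncomputable def Rpoly (n : ℕ) : Polynomial ℝ :=
  ∑ k ∈ Finset.range n, Polynomial.C ((R n k : ℝ)) * Polynomial.X ^ k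

/-- Stirling numbers of the second kind. -/
def stirling2 : ℕ → ℕ → ℕ
  | 0, 0 => 1
  | 0, _ + 1 => 0
  | _ + 1, 0 => 0
  | n + 1, k + 1 => (k + 1) * stirling2 n (k + 1) + stirling2 n k

/-- The number of descents of a permutation of `Fin n`. -/
def des (n : ℕ) (π : Equiv.Perm (Fin n)) : ℕ :=
  ((Finset.range (n - 1)).filter (fun i => permVal π (i + 1) < permVal π i)).card

/-- Eulerian numbers: `A(n,k)` is the number of permutations of `{1,…,n}` with `k-1` descents. -/
def Anum (n k : ℕ) : ℕ :=
  (Finset.univ.filter (fun π : Equiv.Perm (Fin n) => des n π + 1 = k)).card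

/-!
Both `∑ₖ A(n,k) xᵏ (1+x)ⁿ⁻ᵏ` and `∑ᵢ i! S(n,i) xⁱ` equal `x` for `n = 1` and satisfy
`fₙ₊₁ = x(1+x) fₙ' + x fₙ`. For the Stirling side this is the recurrence of `S(n,i)`. For the
Eulerian side, insert the new maximum into a permutation of `{1,…,n}` with `d` descents: of the
`n+1` slots, the `d+1` slots at the end or right after a descent top keep `d` descents, the other
`n-d` create one more. This is Frobenius' formula, and the claim follows from it by substituting
`x = (y-1)/2` and multiplying by `2ⁿ(y+1)`.
-/

def descents (w : ℕ → ℕ) (m : ℕ) : Finset ℕ :=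
  {i ∈ range (m - 1) | w (i + 1) < w i}

def insertAt (w : ℕ → ℕ) (p a : ℕ) (j : ℕ) : ℕ :=
  if j < p then w j else if j = p then a else w (j - 1)

/-- The slots `p ≤ m` where inserting a new maximum into a word of length `m` creates no new
descent. -/
def IsDescentSlot (w : ℕ → ℕ) (m p : ℕ) : Prop :=
  p = m ∨ (0 < p ∧ w p < w (p - 1))

instance (w : ℕ → ℕ) (m p : ℕ) : Decidable (IsDescentSlot w m p) :=
  inferInstanceAs (Decidable (_ ∨ _))

theorem card_descents_eq_sum (w : ℕ → ℕ) (m : ℕ) :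
    #(descents w m) = ∑ i ∈ range (m - 1), if w (i + 1) < w i then 1 else 0 :=
  card_filter _ _

theorem insertAt_of_lt {w : ℕ → ℕ} {p a j : ℕ} (h : j < p) : insertAt w p a j = w j :=
  if_pos h

@[simp] theorem insertAt_self (w : ℕ → ℕ) (p a : ℕ) : insertAt w p a p = a := by
  simp [insertAt]

theorem insertAt_of_gt {w : ℕ → ℕ} {p a j : ℕ} (h : p < j) :
    insertAt w p a j = w (j - 1) := by
  simp [insertAt, show ¬ j < p by omega, show j ≠ p by omega]

/- Below `p - 1` and above `p` the descents are those of `w`, shifted; at `p - 1` the new word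
climbs to the maximum, at `p` it descends from it. -/
theorem card_descents_insertAt {w : ℕ → ℕ} {m p a : ℕ} (hw : ∀ j < m, w j < a)
    (hp : p ≤ m) :
    #(descents (insertAt w p a) (m + 1)) =
      if IsDescentSlot w m p then #(descents w m) else #(descents w m) + 1 := by
  obtain ⟨r, rfl⟩ := Nat.exists_eq_add_of_le hp
  simp only [card_descents_eq_sum, Nat.add_sub_cancel]
  rcases p with _ | q
  · rcases r with _ | s
    · simp [IsDescentSlot]
    · rw [zero_add, sum_range_succ', Nat.add_sub_cancel]
      simp [IsDescentSlot, insertAt, hw 0 (by omega)]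
  have hbelow : ∑ i ∈ range q,
        (if insertAt w (q + 1) a (i + 1) < insertAt w (q + 1) a i then 1 else 0)
      = ∑ i ∈ range q, if w (i + 1) < w i then 1 else 0 :=
    sum_congr rfl fun i hi => by
      have := mem_range.1 hi
      rw [insertAt_of_lt (by omega), insertAt_of_lt (by omega)]
  have hclimb : ¬ insertAt w (q + 1) a (q + 1) < insertAt w (q + 1) a q := by
    rw [insertAt_self, insertAt_of_lt (by omega)]
    exact (hw q (by omega)).not_gt
  rcases r with _ | s
  · rw [add_zero, sum_range_succ, Nat.add_sub_cancel, hbelow, if_neg hclimb]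
    simp [IsDescentSlot]
  have habove : ∑ i ∈ range s, (if insertAt w (q + 1) a (q + 1 + 1 + i + 1)
        < insertAt w (q + 1) a (q + 1 + 1 + i) then 1 else 0)
      = ∑ i ∈ range s, if w (q + 1 + i + 1) < w (q + 1 + i) then 1 else 0 :=
    sum_congr rfl fun i _ => by
      rw [insertAt_of_gt (by omega), insertAt_of_gt (by omega),
        show q + 1 + 1 + i + 1 - 1 = q + 1 + i + 1 by omega,
        show q + 1 + 1 + i - 1 = q + 1 + i by omega]
  have hdescend : insertAt w (q + 1) a (q + 1 + 1) < insertAt w (q + 1) a (q + 1) := by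
    rw [insertAt_self, insertAt_of_gt (by omega), Nat.add_sub_cancel]
    exact hw (q + 1) (by omega)
  have hslot : IsDescentSlot w (q + 1 + (s + 1)) (q + 1) ↔ w (q + 1) < w q := by
    simp [IsDescentSlot]
  rw [if_congr hslot rfl rfl, show q + 1 + (s + 1) = q + 1 + 1 + s by omega,
    show q + 1 + 1 + s - 1 = q + 1 + s by omega, sum_range_add _ (q + 1 + 1) s,
    sum_range_add _ (q + 1) s, sum_range_succ _ (q + 1), sum_range_succ _ q, sum_range_succ _ q,
    hbelow, habove, if_neg hclimb, if_pos hdescend]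
  split_ifs <;> omega

theorem card_filter_isDescentSlot (w : ℕ → ℕ) (m : ℕ) :
    #{p ∈ range (m + 1) | IsDescentSlot w m p} = #(descents w m) + 1 := by
  have : {p ∈ range (m + 1) | IsDescentSlot w m p} =
      insert m ((descents w m).map (addRightEmbedding 1)) := by
    ext p
    simp only [descents, mem_filter, mem_range, mem_insert, mem_map, addRightEmbedding_apply]
    unfold IsDescentSlot
    constructor
    · rintro ⟨hp, hpm | ⟨hp0, hd⟩⟩
      · exact Or.inl hpm
      · rcases eq_or_ne p m with hpm | hpm
        · exact Or.inl hpm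
        exact Or.inr ⟨p - 1, ⟨by omega, by rwa [Nat.sub_add_cancel hp0]⟩, by omega⟩
    · rintro (rfl | ⟨i, ⟨hi, hd⟩, rfl⟩)
      · exact ⟨by omega, Or.inl rfl⟩
      · exact ⟨by omega, Or.inr ⟨by omega, by simpa using hd⟩⟩
  rw [this, card_insert_of_notMem (by simp [descents]; omega), card_map]

theorem Fin.insertNth_injective {α : Type*} {n : ℕ} {p : Fin (n + 1)} {x : α} {f : Fin n → α}
    (hf : Function.Injective f) (hx : x ∉ Set.range f) :
    Function.Injective (Fin.insertNth p x f) := by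
  intro i j hij
  rcases p.eq_self_or_eq_succAbove i with hi | ⟨i, rfl⟩ <;>
    rcases p.eq_self_or_eq_succAbove j with hj | ⟨j, rfl⟩ <;>
    subst_vars <;>
    simp_all [Fin.insertNth_apply_succAbove, Fin.insertNth_apply_same, hf.eq_iff]

theorem Fin.val_succAbove {n : ℕ} (p : Fin (n + 1)) (i : Fin n) :
    (p.succAbove i : ℕ) = if (i : ℕ) < (p : ℕ) then (i : ℕ) else (i : ℕ) + 1 := by
  unfold Fin.succAbove
  split_ifs <;> simp_all [Fin.lt_def]

section Insertion
variable {n : ℕ}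

noncomputable def insertMax (π : Equiv.Perm (Fin n)) (p : Fin (n + 1)) :
    Equiv.Perm (Fin (n + 1)) :=
  Equiv.ofBijective (Fin.insertNth p (Fin.last n) (Fin.castSucc ∘ π))
    (Fin.insertNth_injective ((Fin.castSucc_injective n).comp π.injective)
      (by simp)).bijective_of_finite

@[simp] theorem insertMax_apply_self (π : Equiv.Perm (Fin n)) (p : Fin (n + 1)) :
    insertMax π p p = Fin.last n := by
  simp [insertMax]

@[simp] theorem insertMax_apply_succAbove (π : Equiv.Perm (Fin n)) (p : Fin (n + 1)) (i : Fin n) :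
    insertMax π p (p.succAbove i) = (π i).castSucc := by
  simp [insertMax]

theorem insertMax_bijective :
    Function.Bijective (fun x : Equiv.Perm (Fin n) × Fin (n + 1) => insertMax x.1 x.2) := by
  rw [Fintype.bijective_iff_injective_and_card]
  refine ⟨?_, by simp [Fintype.card_perm, Nat.factorial_succ, mul_comm]⟩
  rintro ⟨π, p⟩ ⟨π', p'⟩ h
  simp only at h
  obtain rfl : p = p' :=
    (insertMax π' p').injective (by rw [insertMax_apply_self, ← h, insertMax_apply_self])
  simp only [Prod.mk.injEq, and_true]
  exact Equiv.ext fun i => by simpa using DFunLike.congr_fun h (p.succAbove i)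

theorem permVal_lt {π : Equiv.Perm (Fin n)} {j : ℕ} (hj : j < n) : permVal π j < n := by
  simp [permVal, hj]

theorem permVal_insertMax (π : Equiv.Perm (Fin n)) (p : Fin (n + 1)) :
    permVal (insertMax π p) = insertAt (permVal π) p n := by
  funext j
  by_cases hj : j < n + 1
  · obtain ⟨J, rfl⟩ : ∃ J : Fin (n + 1), (J : ℕ) = j := ⟨⟨j, hj⟩, rfl⟩
    rcases p.eq_self_or_eq_succAbove J with rfl | ⟨i, rfl⟩
    · simp [permVal, hj]
    · have hσ : permVal (insertMax π p) (p.succAbove i) = π i := by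
        simp [permVal, (p.succAbove i).isLt]
      rw [hσ, Fin.val_succAbove]
      split_ifs with h
      · simp [insertAt_of_lt h, permVal]
      · simp [insertAt_of_gt (show (p : ℕ) < i + 1 by omega), permVal]
  · rw [insertAt_of_gt (by omega)]
    simp [permVal, hj, show ¬ j - 1 < n by omega]

theorem des_le (π : Equiv.Perm (Fin n)) : des n π ≤ n - 1 :=
  (card_filter_le _ _).trans (card_range _).le

theorem des_insertMax (π : Equiv.Perm (Fin n)) (p : Fin (n + 1)) :
    des (n + 1) (insertMax π p) =
      if IsDescentSlot (permVal π) n p then des n π else des n π + 1 := by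
  have := card_descents_insertAt (fun j hj => permVal_lt (π := π) hj) (Fin.is_le p)
  rwa [← permVal_insertMax] at this

theorem sum_comp_des_insertMax {M : Type*} [AddCommMonoid M] (π : Equiv.Perm (Fin n))
    (f : ℕ → M) :
    ∑ p : Fin (n + 1), f (des (n + 1) (insertMax π p)) =
      (des n π + 1) • f (des n π) + (n - des n π) • f (des n π + 1) := by
  have hslots := card_filter_isDescentSlot (permVal π) n
  have hcard := card_filter_add_card_filter_not (s := range (n + 1)) (IsDescentSlot (permVal π) n)
  simp_rw [des_insertMax, apply_ite f]
  rw [Fin.sum_univ_eq_sum_range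
      (fun p => if IsDescentSlot (permVal π) n p then f (des n π) else f (des n π + 1)),
    sum_ite, sum_const, sum_const]
  rw [card_range, hslots] at hcard
  rw [hslots]
  change des n π + 1 + _ = _ at hcard
  congr 2
  omega

theorem sum_Anum_smul {M : Type*} [AddCommMonoid M] (hn : 1 ≤ n) (f : ℕ → M) :
    ∑ k ∈ Icc 1 n, Anum n k • f k = ∑ π : Equiv.Perm (Fin n), f (des n π + 1) := by
  have hmaps : ∀ π ∈ (univ : Finset (Equiv.Perm (Fin n))), des n π + 1 ∈ Icc 1 n :=
    fun π _ => mem_Icc.2 ⟨by omega, by have := des_le π; omega⟩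
  rw [← sum_fiberwise_of_maps_to hmaps]
  refine sum_congr rfl fun k _ => ?_
  rw [Anum, ← sum_const]
  exact sum_congr rfl fun π hπ => by rw [(mem_filter.1 hπ).2]

end Insertion

theorem stirling2_eq_stirlingSecond : stirling2 = Nat.stirlingSecond := by
  funext n k
  induction n generalizing k with
  | zero => cases k <;> rfl
  | succ n ih => cases k <;> simp [stirling2, Nat.stirlingSecond, ih]

section Polynomials
variable (R : Type*) [CommSemiring R]

noncomputable def frobeniusStep : R[X] →ₗ[R] R[X] :=
  LinearMap.mulLeft R (X * (1 + X)) ∘ₗ derivative + LinearMap.mulLeft R X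

/-- `(1 + X) ^ n * Aₙ (X / (1 + X))`, where `Aₙ(t) = ∑ π, t ^ (des π + 1)` is the Eulerian
polynomial. -/
noncomputable def descentPoly (n : ℕ) : R[X] :=
  ∑ π : Equiv.Perm (Fin n), X ^ (des n π + 1) * (1 + X) ^ (n - 1 - des n π)

noncomputable def frobeniusPoly (n : ℕ) : R[X] :=
  ∑ i ∈ range (n + 1), ((i.factorial * stirling2 n i : ℕ) : R[X]) * X ^ i

variable {R}

theorem frobeniusStep_apply (f : R[X]) :
    frobeniusStep R f = X * (1 + X) * derivative f + X * f := rfl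

theorem frobeniusStep_natCast_mul (c : ℕ) (f : R[X]) :
    frobeniusStep R ((c : R[X]) * f) = c * frobeniusStep R f := by
  rw [← nsmul_eq_mul, map_nsmul, nsmul_eq_mul]

theorem frobeniusStep_X_pow (i : ℕ) :
    frobeniusStep R (X ^ i) = (i : R[X]) * X ^ i + ((i + 1 : ℕ) : R[X]) * X ^ (i + 1) := by
  rcases i with _ | i
  · simp [frobeniusStep_apply]
  · simp only [frobeniusStep_apply, derivative_X_pow, C_eq_natCast]
    push_cast
    ring

theorem frobeniusStep_X_pow_mul_one_add_X_pow (d e : ℕ) :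
    frobeniusStep R (X ^ (d + 1) * (1 + X) ^ e) =
      ((e + 1 : ℕ) : R[X]) * (X ^ (d + 2) * (1 + X) ^ e) +
        ((d + 1 : ℕ) : R[X]) * (X ^ (d + 1) * (1 + X) ^ (e + 1)) := by
  rcases e with _ | e
  · simp only [frobeniusStep_apply, pow_zero, mul_one, derivative_X_pow, C_eq_natCast]
    push_cast
    ring
  · simp only [frobeniusStep_apply, derivative_mul, derivative_pow, derivative_add,
      derivative_one, derivative_X, C_eq_natCast]
    push_cast
    ring

theorem descentPoly_succ {n : ℕ} (hn : 1 ≤ n) :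
    descentPoly R (n + 1) = frobeniusStep R (descentPoly R n) := by
  rw [descentPoly, descentPoly, map_sum, ← Fintype.sum_bijective _ insertMax_bijective
    (fun x : Equiv.Perm (Fin n) × Fin (n + 1) =>
      (X : R[X]) ^ (des (n + 1) (insertMax x.1 x.2) + 1) *
        (1 + X) ^ (n + 1 - 1 - des (n + 1) (insertMax x.1 x.2))) _ fun _ => rfl,
    Fintype.sum_prod_type]
  refine sum_congr rfl fun π _ => ?_
  have hd := des_le π
  rw [sum_comp_des_insertMax π (fun d => (X : R[X]) ^ (d + 1) * (1 + X) ^ (n + 1 - 1 - d)),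
    frobeniusStep_X_pow_mul_one_add_X_pow, nsmul_eq_mul, nsmul_eq_mul,
    show n + 1 - 1 - des n π = n - 1 - des n π + 1 by omega,
    show n + 1 - 1 - (des n π + 1) = n - 1 - des n π by omega,
    show n - des n π = n - 1 - des n π + 1 by omega]
  push_cast
  ring

theorem frobeniusPoly_succ (n : ℕ) :
    frobeniusPoly R (n + 1) = frobeniusStep R (frobeniusPoly R n) := by
  set c : ℕ → ℕ := fun i => i.factorial * stirling2 n i with hc
  have hrec : ∀ i, (i + 1).factorial * stirling2 (n + 1) (i + 1) =
      (i + 1) * c (i + 1) + (i + 1) * c i := by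
    intro i
    simp only [hc, stirling2_eq_stirlingSecond, Nat.stirlingSecond_succ_succ, Nat.factorial_succ]
    ring
  have hsplit : ∀ i, (((i + 1) * c (i + 1) + (i + 1) * c i : ℕ) : R[X]) * X ^ (i + 1) =
      (((i + 1) * c (i + 1) : ℕ) : R[X]) * X ^ (i + 1) +
        (c i : R[X]) * (((i + 1 : ℕ) : R[X]) * X ^ (i + 1)) := by
    intro i
    push_cast
    ring
  have hshift : ∑ i ∈ range (n + 1), ((i + 1) * c (i + 1) : ℕ) * (X : R[X]) ^ (i + 1) =
      ∑ i ∈ range (n + 1), ((i * c i : ℕ) : R[X]) * X ^ i := by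
    rw [sum_range_succ, sum_range_succ' _ n]
    simp [hc, stirling2_eq_stirlingSecond, Nat.stirlingSecond_eq_zero_of_lt]
  rw [frobeniusPoly, frobeniusPoly, sum_range_succ', map_sum]
  simp only [frobeniusStep_natCast_mul, frobeniusStep_X_pow, hrec]
  rw [show stirling2 (n + 1) 0 = 0 from rfl, mul_zero, Nat.cast_zero, zero_mul, add_zero]
  simp only [hsplit, sum_add_distrib, hshift]
  rw [← sum_add_distrib]
  refine sum_congr rfl fun i _ => ?_
  simp only [hc]
  push_cast
  ring

theorem descentPoly_eq_frobeniusPoly {n : ℕ} (hn : 1 ≤ n) :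
    descentPoly R n = frobeniusPoly R n := by
  induction n, hn using Nat.le_induction with
  | base => simp [descentPoly, frobeniusPoly, des, sum_range_succ, stirling2]
  | succ n hn ih => rw [descentPoly_succ hn, frobeniusPoly_succ, ih]

theorem sum_Anum_eq_descentPoly {n : ℕ} (hn : 1 ≤ n) :
    ∑ k ∈ Icc 1 n, (Anum n k : R[X]) * X ^ k * (1 + X) ^ (n - k) = descentPoly R n := by
  simp_rw [mul_assoc, ← nsmul_eq_mul]
  rw [sum_Anum_smul hn (fun k => (X : R[X]) ^ k * (1 + X) ^ (n - k)), descentPoly]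
  simp [Nat.sub_sub, add_comm]

theorem frobeniusPoly_eq_sum_Icc {n : ℕ} (hn : 1 ≤ n) :
    frobeniusPoly R n =
      ∑ i ∈ Icc 1 n, ((i.factorial * stirling2 n i : ℕ) : R[X]) * X ^ i := by
  obtain ⟨m, rfl⟩ := Nat.exists_eq_add_of_le' hn
  rw [frobeniusPoly, range_eq_Ico, sum_eq_sum_Ico_succ_bot (by omega), zero_add,
    Ico_add_one_right_eq_Icc, stirling2_eq_stirlingSecond, Nat.stirlingSecond_succ_zero]
  simp

theorem sum_Anum_mul_eq_sum_stirling2 (n : ℕ) :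
    ∑ k ∈ Icc 1 n, (Anum n k : R[X]) * X ^ k * (1 + X) ^ (n - k) =
      ∑ i ∈ Icc 1 n, ((i.factorial * stirling2 n i : ℕ) : R[X]) * X ^ i := by
  rcases Nat.eq_zero_or_pos n with rfl | hn
  · simp
  rw [sum_Anum_eq_descentPoly hn, descentPoly_eq_frobeniusPoly hn, frobeniusPoly_eq_sum_Icc hn]

end Polynomials

theorem an_eq_general (n : ℕ) :
    (Polynomial.X + 1) *
        ∑ i ∈ Finset.Icc 1 n,
          Polynomial.C ((i.factorial * stirling2 n i * 2 ^ (n - i) : ℕ) : ℝ) *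
            (Polynomial.X - 1) ^ i =
      ∑ k ∈ Finset.Icc 1 n,
        Polynomial.C ((Anum n k : ℝ)) *
          (Polynomial.X - 1) ^ k * (Polynomial.X + 1) ^ (n - k + 1) := by
  obtain ⟨q, hq⟩ : ∃ q : ℝ[X], X - 1 = 2 * q := ⟨C 2⁻¹ * (X - 1), by
    rw [← mul_assoc, ← C_ofNat, ← C_mul, mul_inv_cancel₀ two_ne_zero, C_1, one_mul]⟩
  have hq' : X + 1 = 2 * (1 + q) := by linear_combination hq
  have hsplit : ∀ k ∈ Icc 1 n, (2 : ℝ[X]) ^ n = 2 ^ k * 2 ^ (n - k) := fun k hk => by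
    rw [← pow_add, Nat.add_sub_cancel' (mem_Icc.1 hk).2]
  calc _ = (X + 1) * 2 ^ n * aeval q
        (∑ i ∈ Icc 1 n, ((i.factorial * stirling2 n i : ℕ) : ℝ[X]) * X ^ i) := by
        simp only [map_sum, mul_sum]
        refine sum_congr rfl fun i hi => ?_
        simp only [map_mul, map_natCast, map_pow, aeval_X, hsplit i hi, hq]
        push_cast
        ring
    _ = (X + 1) * 2 ^ n * aeval q
        (∑ k ∈ Icc 1 n, (Anum n k : ℝ[X]) * X ^ k * (1 + X) ^ (n - k)) := by
        rw [sum_Anum_mul_eq_sum_stirling2]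
    _ = _ := by
        simp only [map_sum, mul_sum]
        refine sum_congr rfl fun k hk => ?_
        simp only [map_mul, map_natCast, map_pow, aeval_X, map_add, map_one, hsplit k hk]
        rw [hq, hq', mul_pow, mul_pow]
        ring

/-- `a_n(y) = (y+1)∑_{i=1}^n i! S(n,i) 2^{n-i}(y-1)^i = ∑_{k=1}^n A(n,k)(y-1)^k(y+1)^{n-k+1}`. -/
theorem an_eq (n : ℕ) (hn : 1 ≤ n) :
    (Polynomial.X + 1) *
        ∑ i ∈ Finset.Icc 1 n,
          Polynomial.C ((i.factorial * stirling2 n i * 2 ^ (n - i) : ℕ) : ℝ) *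
            (Polynomial.X - 1) ^ i =
      ∑ k ∈ Finset.Icc 1 n,
        Polynomial.C ((Anum n k : ℝ)) *
          (Polynomial.X - 1) ^ k * (Polynomial.X + 1) ^ (n - k + 1) :=
  an_eq_general n
end

section
/- For every n ≥ 2, the polynomial R_n(x) = Σ_{k=1}^{n-1} R(n,k) x^k is divisible by (x+1)^{⌊n/2⌋ - 1}. -/
open Polynomial Finset

/-!
Write a permutation as its word of descents: its number of alternating runs is one more than
the number of changes in that word. Inserting the new maximum `n` into one of the `n + 1` slots
of a permutation of `{0, …, n-1}` with `r` runs replaces one letter of the word by an ascent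
followed by a descent; this leaves the number of runs unchanged for `r` slots, adds one for two
slots and adds two for the remaining `n - 1 - r` slots. Hence
`R_{n+1} = x (1 - x²) R_n' + x (2 + (n - 1) x) R_n`. This operator preserves divisibility by
`(x + 1)^m`, because `1 - x²` has the factor `x + 1`; for `n = 2m + 3` it even produces
`(x + 1)^(m+1)`, because then the cofactor of `(x + 1)^m` vanishes at `-1`.
-/

namespace AlternatingRuns

def numChanges (M : ℕ) (w : ℕ → Bool) : ℕ :=
  ∑ i ∈ range M, if w i = w (i + 1) then 0 else 1

lemma numChanges_congr {M : ℕ} {v w : ℕ → Bool} (h : ∀ i ≤ M, v i = w i) :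
    numChanges M v = numChanges M w :=
  sum_congr rfl fun i hi => by
    rw [h i (by simp at hi; omega), h (i + 1) (by simp at hi; omega)]

lemma numChanges_le (M : ℕ) (w : ℕ → Bool) : numChanges M w ≤ M :=
  (sum_le_card_nsmul _ _ 1 fun i _ => by split <;> simp).trans (by simp)

lemma numChanges_succ (M : ℕ) (w : ℕ → Bool) :
    numChanges (M + 1) w = numChanges M w + if w M = w (M + 1) then 0 else 1 :=
  sum_range_succ _ M

/-- This is how the descent word changes when a new maximum is inserted at position `p`: the
comparison at `p - 1` is replaced by an ascent into the maximum and a descent out of it. -/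
def insertPeak (w : ℕ → Bool) (p : ℕ) (i : ℕ) : Bool :=
  if i + 1 < p then w i else if i + 1 = p then false else if i = p then true else w (i - 1)

section insertPeak

variable (w : ℕ → Bool) {p i : ℕ}

lemma insertPeak_of_lt (h : i + 1 < p) : insertPeak w p i = w i := by
  simp [insertPeak, h]

lemma insertPeak_of_succ_eq (h : i + 1 = p) : insertPeak w p i = false := by
  simp [insertPeak, h]

@[simp] lemma insertPeak_self (p : ℕ) : insertPeak w p p = true := by
  simp [insertPeak]

lemma insertPeak_of_gt (h : p < i) : insertPeak w p i = w (i - 1) := by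
  simp only [insertPeak]
  rw [if_neg (by omega), if_neg (by omega), if_neg (by omega)]

lemma numChanges_insertPeak_succ {m : ℕ} (hp : p ≤ m) :
    numChanges (m + 2) (insertPeak w p) =
      numChanges (m + 1) (insertPeak w p) + if w m = w (m + 1) then 0 else 1 := by
  rw [numChanges_succ, insertPeak_of_gt w (by omega), insertPeak_of_gt w (by omega)]
  rfl

lemma numChanges_insertPeak_last (m : ℕ) :
    numChanges (m + 1) (insertPeak w (m + 2)) = numChanges m w + if w m then 1 else 0 := by
  rw [numChanges_succ, numChanges_congr (v := insertPeak w (m + 2)) (w := w)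
    (fun i hi => insertPeak_of_lt w (by omega))]
  cases h : w m <;> simp (disch := omega) [insertPeak_of_lt, insertPeak_of_succ_eq, h]

lemma numChanges_insertPeak_penultimate (q : ℕ) :
    numChanges (q + 2) (insertPeak w (q + 2)) =
      numChanges (q + 1) w + if w (q + 1) then (if w q then 2 else 0) else 1 := by
  rw [numChanges_succ, numChanges_succ, numChanges_succ _ w,
    numChanges_congr (v := insertPeak w (q + 2)) (w := w)
      (fun i hi => insertPeak_of_lt w (by omega))]
  cases h0 : w q <;> cases w (q + 1) <;>
    simp (disch := omega) [insertPeak_of_lt, insertPeak_of_succ_eq, h0]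

lemma numChanges_insertPeak_antepenultimate (q : ℕ) :
    numChanges (q + 3) (insertPeak w (q + 2)) = numChanges (q + 2) w +
      if w (q + 1) then (if w q then 2 else 0) else (if w (q + 2) then 0 else 2) := by
  rw [numChanges_succ, numChanges_succ, numChanges_succ, numChanges_succ _ w, numChanges_succ _ w,
    numChanges_congr (v := insertPeak w (q + 2)) (w := w)
      (fun i hi => insertPeak_of_lt w (by omega))]
  cases h0 : w q <;> cases w (q + 1) <;> cases h2 : w (q + 2) <;>
    simp (disch := omega) [insertPeak_of_lt, insertPeak_of_succ_eq, insertPeak_of_gt, h0, h2]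

variable {R : Type*} [CommRing R] (x : R)

lemma sum_pow_numChanges_insertPeak_step (q : ℕ)
    (ih : ∑ p ∈ range (q + 4), x ^ numChanges (q + 2) (insertPeak w p) =
      x ^ numChanges (q + 1) w *
        (1 + numChanges (q + 1) w + 2 * x + ((q + 1 : ℕ) - numChanges (q + 1) w) * x ^ 2)) :
    ∑ p ∈ range (q + 5), x ^ numChanges (q + 3) (insertPeak w p) =
      x ^ numChanges (q + 2) w *
        (1 + numChanges (q + 2) w + 2 * x + ((q + 2 : ℕ) - numChanges (q + 2) w) * x ^ 2) := by
  rw [sum_range_succ, sum_range_succ] at ih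
  rw [sum_range_succ, sum_range_succ, sum_range_succ]
  have extend : ∑ p ∈ range (q + 2), x ^ numChanges (q + 3) (insertPeak w p) =
      x ^ (if w (q + 1) = w (q + 2) then 0 else 1) *
        ∑ p ∈ range (q + 2), x ^ numChanges (q + 2) (insertPeak w p) := by
    rw [mul_sum]
    refine sum_congr rfl fun p hp => ?_
    rw [numChanges_insertPeak_succ w (by simp at hp; omega), pow_add, mul_comm]
  have e₁ : numChanges (q + 2) (insertPeak w (q + 2)) = _ := numChanges_insertPeak_penultimate w q
  have e₂ : numChanges (q + 2) (insertPeak w (q + 3)) = _ := numChanges_insertPeak_last w (q + 1)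
  have e₃ : numChanges (q + 3) (insertPeak w (q + 3)) = _ :=
    numChanges_insertPeak_penultimate w (q + 1)
  have e₄ : numChanges (q + 3) (insertPeak w (q + 4)) = _ := numChanges_insertPeak_last w (q + 2)
  have c : numChanges (q + 2) w = _ := numChanges_succ (q + 1) w
  replace ih := congrArg (x ^ (if w (q + 1) = w (q + 2) then 0 else 1) * ·) ih
  rw [e₁, e₂] at ih
  rw [extend, numChanges_insertPeak_antepenultimate, e₃, e₄, c]
  push_cast at ih ⊢
  cases h0 : w q <;> cases h1 : w (q + 1) <;> cases h2 : w (q + 2) <;>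
    simp [h0, h1, h2] at ih ⊢ <;> linear_combination ih

theorem sum_pow_numChanges_insertPeak (m : ℕ) :
    ∑ p ∈ range (m + 3), x ^ numChanges (m + 1) (insertPeak w p) =
      x ^ numChanges m w * (1 + numChanges m w + 2 * x + (m - numChanges m w) * x ^ 2) := by
  induction m with
  | zero => cases h : w 0 <;> simp [sum_range_succ, numChanges, insertPeak, h] <;> ring
  | succ m ih =>
    rcases m with _ | q
    · cases h0 : w 0 <;> cases h1 : w 1 <;>
        simp [sum_range_succ, numChanges, insertPeak, h0, h1] <;> ring
    · exact sum_pow_numChanges_insertPeak_step w x q ih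

end insertPeak

def descentWord {n : ℕ} (τ : Equiv.Perm (Fin n)) (i : ℕ) : Bool :=
  decide (permVal τ (i + 1) < permVal τ i)

section permVal

variable {n : ℕ} (τ : Equiv.Perm (Fin n))

lemma permVal_lt (hn : 0 < n) (j : ℕ) : permVal τ j < n := by
  unfold permVal
  split
  · exact (τ _).isLt
  · exact hn

lemma eq_of_permVal_eq {a b : ℕ} (ha : a < n) (hb : b < n) (h : permVal τ a = permVal τ b) :
    a = b := by
  simp only [permVal, dif_pos ha, dif_pos hb, Fin.val_inj, EmbeddingLike.apply_eq_iff_eq,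
    Fin.mk.injEq] at h
  exact h

end permVal

lemma runs_eq {n : ℕ} (hn : 2 ≤ n) (τ : Equiv.Perm (Fin n)) :
    runs n τ = 1 + numChanges (n - 2) (descentWord τ) := by
  rw [runs, if_neg (by omega), card_filter, sum_Ico_eq_sum_range,
    show n - 1 - 1 = n - 2 by omega]
  congr 1
  refine sum_congr rfl fun i hi => ?_
  simp only [mem_range] at hi
  have h₀ : permVal τ i ≠ permVal τ (i + 1) := fun h => by
    have := eq_of_permVal_eq τ (by omega) (by omega) h; omega
  have h₁ : permVal τ (i + 1) ≠ permVal τ (i + 1 + 1) := fun h => by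
    have := eq_of_permVal_eq τ (by omega) (by omega) h; omega
  simp only [descentWord, decide_eq_decide, add_comm 1 i, Nat.add_sub_cancel]
  split_ifs <;> omega

lemma runs_lt {n : ℕ} (hn : 2 ≤ n) (τ : Equiv.Perm (Fin n)) : runs n τ < n := by
  have := numChanges_le (n - 2) (descentWord τ)
  rw [runs_eq hn]
  omega

/-- Insert the new maximum `n` into `τ` at position `p`. -/
def insertMax {n : ℕ} (τ : Equiv.Perm (Fin n)) (p : Fin (n + 1)) : Equiv.Perm (Fin (n + 1)) :=
  ((finSuccEquiv' p).trans τ.optionCongr).trans (finSuccEquiv' (Fin.last n)).symm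

section insertMax

variable {n : ℕ} (τ : Equiv.Perm (Fin n)) (p : Fin (n + 1))

@[simp] lemma insertMax_apply_self : insertMax τ p p = Fin.last n := by
  simp [insertMax, finSuccEquiv'_at, finSuccEquiv'_symm_none]

@[simp] lemma insertMax_apply_succAbove (i : Fin n) :
    insertMax τ p (p.succAbove i) = (τ i).castSucc := by
  simp [insertMax, finSuccEquiv'_succAbove, finSuccEquiv'_symm_some, Fin.succAbove_last]

lemma permVal_insertMax (j : ℕ) : permVal (insertMax τ p) j =
    if j < p then permVal τ j else if j = p then n else permVal τ (j - 1) := by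
  rcases lt_trichotomy j p with h | rfl | h
  · have hj : j < n := by omega
    have : (⟨j, by omega⟩ : Fin (n + 1)) = p.succAbove ⟨j, hj⟩ := by
      rw [Fin.succAbove_of_castSucc_lt _ _ (by simpa [Fin.lt_def] using h)]; rfl
    simp [permVal, h, hj, this, show j < n + 1 by omega]
  · simp [permVal, p.isLt]
  · by_cases hj : j < n + 1
    · have : (⟨j, hj⟩ : Fin (n + 1)) = p.succAbove ⟨j - 1, by omega⟩ := by
        rw [Fin.succAbove_of_le_castSucc _ _ (by simp [Fin.le_def]; omega)]
        ext; simp; omega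
      simp [permVal, hj, this, show ¬ j < p by omega, show j ≠ p by omega,
        show j - 1 < n by omega]
    · simp [permVal, hj, show ¬ j < p by omega, show j ≠ p by omega, show ¬ j - 1 < n by omega]

lemma descentWord_insertMax {i : ℕ} (hi : i < n) :
    descentWord (insertMax τ p) i = insertPeak (descentWord τ) p i := by
  have hlt := permVal_lt τ (by omega)
  simp only [descentWord, insertPeak, permVal_insertMax]
  split_ifs <;> first | omega | rfl | rw [Nat.add_sub_cancel, Nat.sub_add_cancel (by omega)] |
    simp [hlt, (hlt _).le]

lemma insertMax_bijective :
    Function.Bijective fun x : Equiv.Perm (Fin n) × Fin (n + 1) => insertMax x.1 x.2 := by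
  refine (Fintype.bijective_iff_injective_and_card _).2
    ⟨?_, by simp [Fintype.card_perm, Nat.factorial_succ, mul_comm]⟩
  rintro ⟨τ, p⟩ ⟨τ', p'⟩ h
  simp only at h
  obtain rfl : p = p' := (insertMax τ' p').injective <| by
    rw [insertMax_apply_self, ← h, insertMax_apply_self]
  refine Prod.ext (Equiv.ext fun i => Fin.castSucc_injective n ?_) rfl
  simpa using congr($h (p.succAbove i))

end insertMax

lemma runs_insertMax {n : ℕ} (hn : 1 ≤ n) (τ : Equiv.Perm (Fin n)) (p : Fin (n + 1)) :
    runs (n + 1) (insertMax τ p) = 1 + numChanges (n - 1) (insertPeak (descentWord τ) p) := by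
  rw [runs_eq (by omega), Nat.add_sub_add_right,
    numChanges_congr fun i hi => descentWord_insertMax τ p (by omega)]

lemma sum_pow_runs_insertMax {R : Type*} [CommRing R] (x : R) {n : ℕ} (hn : 2 ≤ n)
    (τ : Equiv.Perm (Fin n)) :
    ∑ p, x ^ runs (n + 1) (insertMax τ p) =
      x ^ runs n τ * (runs n τ + 2 * x + (n - 1 - runs n τ) * x ^ 2) := by
  obtain ⟨m, rfl⟩ : ∃ m, n = m + 2 := ⟨n - 2, by omega⟩
  simp only [runs_insertMax (n := m + 2) (by omega), runs_eq hn, pow_add, ← mul_sum,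
    Nat.add_sub_cancel, show m + 2 - 1 = m + 1 by omega]
  rw [Fin.sum_univ_eq_sum_range (fun p => x ^ numChanges (m + 1) (insertPeak _ p)),
    sum_pow_numChanges_insertPeak]
  push_cast
  ring

lemma Rpoly_eq_sum {n : ℕ} (hn : 2 ≤ n) :
    Rpoly n = ∑ τ : Equiv.Perm (Fin n), X ^ runs n τ := by
  rw [← sum_fiberwise_of_maps_to (g := runs n) (t := range n)
    fun τ _ => mem_range.2 (runs_lt hn τ)]
  refine sum_congr rfl fun k _ => ?_
  rw [sum_congr rfl fun τ hτ => by rw [(mem_filter.1 hτ).2], sum_const, nsmul_eq_mul,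
    C_eq_natCast, R]

section divisibility

variable {R : Type*} [CommRing R]

noncomputable def runsStep (n : ℕ) (f : R[X]) : R[X] :=
  X * (1 - X ^ 2) * derivative f + X * (2 + ((n : R[X]) - 1) * X) * f

lemma X_add_one_mul_derivative_pow_mul (m : ℕ) (g : R[X]) :
    (X + 1) * derivative ((X + 1) ^ m * g) =
      (X + 1) ^ m * ((m : R[X]) * g + (X + 1) * derivative g) := by
  rcases m with _ | m
  · simp
  · simp only [derivative_mul, derivative_pow_succ, derivative_X, derivative_one,
      map_add, map_natCast, map_one, Nat.cast_succ]
    ring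

lemma pow_dvd_runsStep {m : ℕ} {f : R[X]} (hf : (X + 1) ^ m ∣ f) (n : ℕ) :
    (X + 1) ^ m ∣ runsStep n f := by
  obtain ⟨g, rfl⟩ := hf
  have hd := X_add_one_mul_derivative_pow_mul m g
  exact ⟨X * (1 - X) * ((m : R[X]) * g + (X + 1) * derivative g) +
    X * (2 + ((n : R[X]) - 1) * X) * g, by rw [runsStep]; linear_combination (X * (1 - X)) * hd⟩

lemma pow_succ_dvd_runsStep {m : ℕ} {f : R[X]} (hf : (X + 1) ^ m ∣ f) :
    (X + 1) ^ (m + 1) ∣ runsStep (2 * m + 3) f := by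
  obtain ⟨g, rfl⟩ := hf
  have hd := X_add_one_mul_derivative_pow_mul m g
  exact ⟨X * ((1 - X) * derivative g + ((m : R[X]) + 2) * g), by
    rw [runsStep]; push_cast; linear_combination (X * (1 - X)) * hd⟩

end divisibility

lemma Rpoly_succ {n : ℕ} (hn : 2 ≤ n) : Rpoly (n + 1) = runsStep n (Rpoly n) := by
  rw [Rpoly_eq_sum (by omega), Rpoly_eq_sum hn, runsStep,
    ← Fintype.sum_bijective _ insertMax_bijective _ _ fun _ => rfl, Fintype.sum_prod_type,
    derivative_sum, mul_sum, mul_sum, ← sum_add_distrib]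
  refine sum_congr rfl fun τ _ => ?_
  obtain ⟨r, hr⟩ : ∃ r, runs n τ = r + 1 := ⟨_, (runs_eq hn τ).trans (add_comm _ _)⟩
  rw [sum_pow_runs_insertMax X hn, hr, derivative_X_pow, C_eq_natCast]
  push_cast
  ring

lemma X_add_one_pow_dvd_Rpoly (m : ℕ) :
    (X + 1) ^ m ∣ Rpoly (2 * m + 2) ∧ (X + 1) ^ m ∣ Rpoly (2 * m + 3) := by
  induction m with
  | zero => simp
  | succ m ih =>
    have even : (X + 1) ^ (m + 1) ∣ Rpoly (2 * (m + 1) + 2) :=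
      Rpoly_succ (n := 2 * m + 3) (by omega) ▸ pow_succ_dvd_runsStep ih.2
    exact ⟨even, Rpoly_succ (n := 2 * (m + 1) + 2) (by omega) ▸ pow_dvd_runsStep even _⟩

end AlternatingRuns

/-- `R_n(x)` is divisible by `(x+1)^{⌊n/2⌋-1}`. -/
theorem Rpoly_divisible (n : ℕ) (hn : 2 ≤ n) :
    (Polynomial.X + 1) ^ (n / 2 - 1) ∣ Rpoly n := by
  obtain ⟨m, rfl | rfl⟩ : ∃ m, n = 2 * m + 2 ∨ n = 2 * m + 3 := ⟨n / 2 - 1, by omega⟩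
  · rw [show (2 * m + 2) / 2 - 1 = m by omega]
    exact (AlternatingRuns.X_add_one_pow_dvd_Rpoly m).1
  · rw [show (2 * m + 3) / 2 - 1 = m by omega]
    exact (AlternatingRuns.X_add_one_pow_dvd_Rpoly m).2
end
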